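/- Assume p ≥ 5. Let e ≥ 0 be an integer and q = p^e. Define σ : SL(2,k) → Mat(4,k) by σ([[a,b],[c,d]]) = [[a^{3q}, a^{2q}b^{q}, (1/2)a^{q}b^{2q}, (1/6)b^{3q}], [3a^{2q}c^{q}, a^{q}(ad+2bc)^{q}, b^{q}(ad+(1/2)bc)^{q}, (1/2)b^{2q}d^{q}], [6a^{q}c^{2q}, 4c^{q}(ad+(1/2)bc)^{q}, d^{q}(ad+2bc)^{q}, b^{q}d^{2q}], [6c^{3q}, 6c^{2q}d^{q}, 3c^{q}d^{2q}, d^{3q}]]. Then σ takes values in SL(4,k) and is a group homomorphism, i.e. det σ(A) = 1 and σ(A·B) = σ(A)·σ(B) for all A,B ∈ SL(2,k); moreover the only column vector v ∈ k⁴ with σ(A)·v = v for all A ∈ SL(2,k) is v = 0, and the only row vector w ∈ k⁴ with w·σ(A) = w for all A ∈ SL(2,k) is w = 0. -/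

import Mathlib

/-!
For `q = p ^ e` the map `σ_q` is the Frobenius twist of `σ_1`, and `σ_1` is the symmetric cube
representation conjugated by `diag(0!, 1!, 2!, 3!)`. Multiplicativity and `det = (ad - bc) ^ 6`
are polynomial identities for the symmetric cube, and they survive the Frobenius twist since it is
a ring homomorphism. The unipotent elements `[[1,1],[0,1]]` and `[[1,0],[1,1]]` act by
unitriangular matrices whose off-diagonal entries are units once `6 ≠ 0`, which leaves no nonzero
fixed column or row vector.
-/

open Matrix

/-- The explicit map `σ` of form (I)* on all of `SL(2,k)`. -/
noncomputable def sigmaStarI (k : Type*) [Field k] (q : ℕ)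
    (A : SpecialLinearGroup (Fin 2) k) : Matrix (Fin 4) (Fin 4) k :=
  let a := A.1 0 0
  let b := A.1 0 1
  let c := A.1 1 0
  let d := A.1 1 1
  !![a ^ (3 * q), a ^ (2 * q) * b ^ q, (1 / 2 : k) * (a ^ q * b ^ (2 * q)),
       (1 / 6 : k) * b ^ (3 * q);
     3 * (a ^ (2 * q) * c ^ q), a ^ q * (a * d + 2 * (b * c)) ^ q,
       b ^ q * (a * d + (1 / 2 : k) * (b * c)) ^ q, (1 / 2 : k) * (b ^ (2 * q) * d ^ q);
     6 * (a ^ q * c ^ (2 * q)), 4 * (c ^ q * (a * d + (1 / 2 : k) * (b * c)) ^ q),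
       d ^ q * (a * d + 2 * (b * c)) ^ q, b ^ q * d ^ (2 * q);
     6 * c ^ (3 * q), 6 * (c ^ (2 * q) * d ^ q), 3 * (c ^ q * d ^ (2 * q)), d ^ (3 * q)]

/-- The action `f(x, y) ↦ f((x, y) M)` on binary cubic forms, in the basis
`x³, x²y, xy², y³`. -/
def symCube {R : Type*} [CommRing R] (M : Matrix (Fin 2) (Fin 2) R) : Matrix (Fin 4) (Fin 4) R :=
  let a := M 0 0
  let b := M 0 1
  let c := M 1 0
  let d := M 1 1
  !![a ^ 3, a ^ 2 * b, a * b ^ 2, b ^ 3;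
     3 * (a ^ 2 * c), a * (a * d + 2 * (b * c)), b * (2 * (a * d) + b * c), 3 * (b ^ 2 * d);
     3 * (a * c ^ 2), c * (2 * (a * d) + b * c), d * (a * d + 2 * (b * c)), 3 * (b * d ^ 2);
     c ^ 3, c ^ 2 * d, c * d ^ 2, d ^ 3]

theorem symCube_mul {R : Type*} [CommRing R] (M N : Matrix (Fin 2) (Fin 2) R) :
    symCube (M * N) = symCube M * symCube N := by
  ext i j
  fin_cases i <;> fin_cases j <;>
    simp [symCube, Matrix.mul_apply, Fin.sum_univ_succ] <;> ring

theorem det_symCube {R : Type*} [CommRing R] (M : Matrix (Fin 2) (Fin 2) R) :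
    (symCube M).det = M.det ^ 6 := by
  rw [det_succ_row_zero, det_fin_two M]
  simp [Fin.sum_univ_succ, det_fin_three, symCube, Fin.succAbove]
  ring

theorem sigmaStarI_pow_expChar {k : Type*} [Field k] {p : ℕ} [ExpChar k p] (e : ℕ)
    (A : SpecialLinearGroup (Fin 2) k) :
    sigmaStarI k (p ^ e) A = (sigmaStarI k 1 A).map (iterateFrobenius k p e) := by
  ext i j
  fin_cases i <;> fin_cases j <;>
    simp [sigmaStarI, pow_mul', ← iterateFrobenius_def, map_ofNat]

def upperUnipotent (k : Type*) [CommRing k] : SpecialLinearGroup (Fin 2) k :=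
  ⟨!![1, 1; 0, 1], by simp⟩

def lowerUnipotent (k : Type*) [CommRing k] : SpecialLinearGroup (Fin 2) k :=
  ⟨!![1, 0; 1, 1], by simp⟩

theorem two_ne_zero_of_six_ne_zero {R : Type*} [Semiring R] (h6 : (6 : R) ≠ 0) :
    (2 : R) ≠ 0 :=
  left_ne_zero_of_mul (b := 3) (by norm_num [h6])

theorem three_ne_zero_of_six_ne_zero {R : Type*} [Semiring R] (h6 : (6 : R) ≠ 0) :
    (3 : R) ≠ 0 :=
  right_ne_zero_of_mul (a := 2) (by norm_num [h6])

theorem six_ne_zero_of_five_le_char {R : Type*} [AddMonoidWithOne R] {p : ℕ} [Fact p.Prime]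
    [CharP R p] (hp : 5 ≤ p) : (6 : R) ≠ 0 := by
  have hndvd : ¬p ∣ 2 * 3 := fun h => by
    rcases (Nat.Prime.dvd_mul Fact.out).mp h with h | h <;>
      have := Nat.le_of_dvd (by norm_num) h <;> omega
  exact_mod_cast (CharP.cast_eq_zero_iff R p (2 * 3)).not.mpr hndvd

section Field

variable {k : Type*} [Field k]

theorem isUnit_diagonal_factorials (h6 : (6 : k) ≠ 0) :
    IsUnit (diagonal ![(1 : k), 1, 2, 6]) := by
  have h2 := two_ne_zero_of_six_ne_zero h6
  refine isUnit_diagonal.mpr (Pi.isUnit_iff.mpr fun i => ?_)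
  fin_cases i <;> simp [h2, h6]

theorem sigmaStarI_one_mul_diagonal (h6 : (6 : k) ≠ 0) (A : SpecialLinearGroup (Fin 2) k) :
    sigmaStarI k 1 A * diagonal ![1, 1, 2, 6] =
      diagonal ![1, 1, 2, 6] * symCube (A : Matrix (Fin 2) (Fin 2) k) := by
  have h2 := two_ne_zero_of_six_ne_zero h6
  ext i j
  fin_cases i <;> fin_cases j <;> simp [sigmaStarI, symCube] <;> field_simp <;> ring

theorem sigmaStarI_one_mul (h6 : (6 : k) ≠ 0) (A B : SpecialLinearGroup (Fin 2) k) :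
    sigmaStarI k 1 (A * B) = sigmaStarI k 1 A * sigmaStarI k 1 B := by
  rw [← (isUnit_diagonal_factorials h6).mul_left_inj, sigmaStarI_one_mul_diagonal h6,
    Matrix.SpecialLinearGroup.coe_mul, symCube_mul, Matrix.mul_assoc (sigmaStarI k 1 A),
    sigmaStarI_one_mul_diagonal h6 B, ← Matrix.mul_assoc (sigmaStarI k 1 A),
    sigmaStarI_one_mul_diagonal h6 A, Matrix.mul_assoc]

theorem det_sigmaStarI_one (h6 : (6 : k) ≠ 0) (A : SpecialLinearGroup (Fin 2) k) :
    (sigmaStarI k 1 A).det = 1 := by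
  have hD := (isUnit_iff_isUnit_det _).mp (isUnit_diagonal_factorials h6)
  rw [← hD.mul_left_inj, ← det_mul, sigmaStarI_one_mul_diagonal h6, det_mul, det_symCube,
    A.det_coe, one_pow, mul_one, one_mul]

theorem sigmaStarI_upperUnipotent {q : ℕ} (hq : q ≠ 0) :
    sigmaStarI k q (upperUnipotent k) =
      !![1, 1, 1 / 2, 1 / 6; 0, 1, 1, 1 / 2; 0, 0, 1, 1; 0, 0, 0, 1] := by
  ext i j
  fin_cases i <;> fin_cases j <;> simp [sigmaStarI, upperUnipotent, hq]

theorem sigmaStarI_lowerUnipotent {q : ℕ} (hq : q ≠ 0) :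
    sigmaStarI k q (lowerUnipotent k) = !![1, 0, 0, 0; 3, 1, 0, 0; 6, 4, 1, 0; 6, 6, 3, 1] := by
  ext i j
  fin_cases i <;> fin_cases j <;> simp [sigmaStarI, lowerUnipotent, hq]

theorem eq_zero_of_forall_sigmaStarI_mulVec_eq_self (h6 : (6 : k) ≠ 0) {q : ℕ} (hq : q ≠ 0)
    {v : Fin 4 → k} (hv : ∀ A, sigmaStarI k q A *ᵥ v = v) : v = 0 := by
  have hu := hv (upperUnipotent k)
  have hl := hv (lowerUnipotent k)
  rw [sigmaStarI_upperUnipotent hq] at hu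
  rw [sigmaStarI_lowerUnipotent hq] at hl
  have hu0 := congr_fun hu 0
  have hu1 := congr_fun hu 1
  have hu2 := congr_fun hu 2
  have hl3 := congr_fun hl 3
  simp only [mulVec, dotProduct, one_div, Fin.isValue, of_apply, cons_val', cons_val_fin_one,
    cons_val_zero, Fin.sum_univ_four, one_mul, cons_val_one, cons_val, zero_mul, zero_add, add_zero,
    add_eq_left, add_eq_right] at hu0 hu1 hu2 hl3
  have h3 : v 3 = 0 := by linear_combination hu2
  have h2 : v 2 = 0 := by linear_combination hu1 - (1 / 2 : k) * h3
  have h1 : v 1 = 0 := by linear_combination hu0 - (1 / 2 : k) * h2 - (1 / 6 : k) * h3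
  have h0 : v 0 = 0 := by
    refine (mul_eq_zero.mp ?_).resolve_left h6
    linear_combination hl3 - 6 * h1 - 3 * h2
  ext i
  fin_cases i <;> assumption

theorem eq_zero_of_forall_vecMul_sigmaStarI_eq_self (h6 : (6 : k) ≠ 0) {q : ℕ} (hq : q ≠ 0)
    {w : Fin 4 → k} (hw : ∀ A, w ᵥ* sigmaStarI k q A = w) : w = 0 := by
  have hu := hw (upperUnipotent k)
  have hl := hw (lowerUnipotent k)
  rw [sigmaStarI_upperUnipotent hq] at hu
  rw [sigmaStarI_lowerUnipotent hq] at hl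
  have hl0 := congr_fun hl 0
  have hl1 := congr_fun hl 1
  have hl2 := congr_fun hl 2
  have hu3 := congr_fun hu 3
  simp only [vecMul, dotProduct, Fin.isValue, of_apply, cons_val', cons_val_zero, cons_val_fin_one,
    Fin.sum_univ_four, mul_one, cons_val_one, cons_val, mul_zero, zero_add, add_zero, add_eq_left,
    mul_eq_zero, one_div, add_eq_right] at hl0 hl1 hl2 hu3
  have h2ne := two_ne_zero_of_six_ne_zero h6
  have h3ne := three_ne_zero_of_six_ne_zero h6
  have h3 : w 3 = 0 := hl2.resolve_right h3ne
  have h2 : w 2 = 0 := by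
    refine (mul_eq_zero.mp ?_).resolve_left (mul_ne_zero h2ne h2ne)
    linear_combination hl1 - 6 * h3
  have h1 : w 1 = 0 := by
    refine (mul_eq_zero.mp ?_).resolve_left h3ne
    linear_combination hl0 - 6 * h2 - 6 * h3
  have h0 : w 0 = 0 := by
    refine (mul_eq_zero.mp ?_).resolve_right (inv_ne_zero h6)
    linear_combination hu3 - 2⁻¹ * h1 - h2
  ext i
  fin_cases i <;> assumption

end Field

theorem stmt10_general {k : Type*} [Field k] {p : ℕ} [Fact p.Prime] [CharP k p]
    (hp : 5 ≤ p) (e : ℕ) :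
    (∀ A : SpecialLinearGroup (Fin 2) k, (sigmaStarI k (p ^ e) A).det = 1) ∧
      (∀ A B : SpecialLinearGroup (Fin 2) k,
        sigmaStarI k (p ^ e) (A * B) = sigmaStarI k (p ^ e) A * sigmaStarI k (p ^ e) B) ∧
      (∀ v : Fin 4 → k,
        (∀ A : SpecialLinearGroup (Fin 2) k, sigmaStarI k (p ^ e) A *ᵥ v = v) → v = 0) ∧
      ∀ w : Fin 4 → k,
        (∀ A : SpecialLinearGroup (Fin 2) k, w ᵥ* sigmaStarI k (p ^ e) A = w) → w = 0 := by
  have h6 : (6 : k) ≠ 0 := six_ne_zero_of_five_le_char hp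
  have hq : p ^ e ≠ 0 := pow_ne_zero e (Fact.out : p.Prime).ne_zero
  refine ⟨fun A => ?_, fun A B => ?_,
    fun v hv => eq_zero_of_forall_sigmaStarI_mulVec_eq_self h6 hq hv,
    fun w hw => eq_zero_of_forall_vecMul_sigmaStarI_eq_self h6 hq hw⟩
  · rw [sigmaStarI_pow_expChar, ← RingHom.mapMatrix_apply, ← RingHom.map_det,
      det_sigmaStarI_one h6, map_one]
  · rw [sigmaStarI_pow_expChar, sigmaStarI_pow_expChar, sigmaStarI_pow_expChar,
      sigmaStarI_one_mul h6, Matrix.map_mul]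

/-- For `p ≥ 5` the explicit map `σ` of form (I)* takes values in
`SL(4,k)`, is a group homomorphism, and has no nonzero fixed column vectors and no nonzero
fixed row vectors. -/
theorem stmt10 {k : Type*} [Field k] [IsAlgClosed k] {p : ℕ} [Fact p.Prime] [CharP k p]
    (hp : 5 ≤ p) (e : ℕ) :
    (∀ A : SpecialLinearGroup (Fin 2) k, (sigmaStarI k (p ^ e) A).det = 1) ∧
      (∀ A B : SpecialLinearGroup (Fin 2) k,
        sigmaStarI k (p ^ e) (A * B) = sigmaStarI k (p ^ e) A * sigmaStarI k (p ^ e) B) ∧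
      (∀ v : Fin 4 → k,
        (∀ A : SpecialLinearGroup (Fin 2) k, sigmaStarI k (p ^ e) A *ᵥ v = v) → v = 0) ∧
      ∀ w : Fin 4 → k,
        (∀ A : SpecialLinearGroup (Fin 2) k, w ᵥ* sigmaStarI k (p ^ e) A = w) → w = 0 :=
  stmt10_general hp e
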